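/- arXiv:math/9912252 — 4 statements merged into one kernel-verified Lean document; each statement's English description precedes it below -/
import Mathlib

section
/- The function w : ℕ → ℕ defined by w(k) = k·φ(lcm(k,f)) / ((k,h)·φ(f)) is multiplicative, where φ is Euler's totient function. -/
/-!
For coprime `m`, `n` the numbers `lcm m f` and `lcm n f` have gcd `f` and lcm `lcm (m n) f`,
so the identity `φ (gcd a b) * φ (lcm a b) = φ a * φ b` gives
`φ f * φ (lcm (m n) f) = φ (lcm m f) * φ (lcm n f)`; together with
`gcd (m n) h = gcd m h * gcd n h`, the extra factor `φ f` cancels in `w m * w n`.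
-/

open scoped Nat

namespace Nat

theorem lcm_lcm_distrib_right (m n k : ℕ) : (m.lcm n).lcm k = (m.lcm k).lcm (n.lcm k) := by
  rw [Nat.lcm_assoc, Nat.lcm_assoc, Nat.lcm_eq_right (Nat.dvd_lcm_right n k)]

theorem Coprime.gcd_lcm_lcm {m n : ℕ} (hmn : m.Coprime n) (k : ℕ) :
    (m.lcm k).gcd (n.lcm k) = k := by
  refine Nat.dvd_antisymm ?_ (Nat.dvd_gcd (Nat.dvd_lcm_right m k) (Nat.dvd_lcm_right n k))
  have hm : (m.lcm k).gcd (n.lcm k) ∣ m * k := (Nat.gcd_dvd_left _ _).trans (Nat.lcm_dvd_mul m k)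
  have hn : (m.lcm k).gcd (n.lcm k) ∣ n * k := (Nat.gcd_dvd_right _ _).trans (Nat.lcm_dvd_mul n k)
  simpa [Nat.gcd_mul_right, hmn] using Nat.dvd_gcd hm hn

theorem totient_gcd_mul_totient_lcm (a b : ℕ) : φ (a.gcd b) * φ (a.lcm b) = φ a * φ b := by
  rcases Nat.eq_zero_or_pos (a.gcd b) with hg | hg
  · simp [Nat.gcd_eq_zero_iff.mp hg]
  -- Both sides times `gcd a b` equal `φ (gcd a b) * φ (a * b)`, since `a * b = gcd a b * lcm a b`.
  apply Nat.eq_of_mul_eq_mul_right hg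
  have hlcm := totient_gcd_mul_totient_mul (a.gcd b) (a.lcm b)
  rw [Nat.gcd_eq_left ((Nat.gcd_dvd_left a b).trans (Nat.dvd_lcm_left a b)),
    Nat.gcd_mul_lcm] at hlcm
  rw [← hlcm, totient_gcd_mul_totient_mul]

theorem Coprime.totient_mul_totient_lcm_mul {m n : ℕ} (hmn : m.Coprime n) (k : ℕ) :
    φ k * φ ((m * n).lcm k) = φ (m.lcm k) * φ (n.lcm k) := by
  rw [← hmn.lcm_eq_mul, lcm_lcm_distrib_right, ← totient_gcd_mul_totient_lcm (m.lcm k),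
    hmn.gcd_lcm_lcm]

theorem gcd_mul_totient_dvd_mul_totient_lcm (k h f : ℕ) : k.gcd h * φ f ∣ k * φ (k.lcm f) :=
  mul_dvd_mul (Nat.gcd_dvd_left k h) (totient_dvd_of_dvd (Nat.dvd_lcm_right k f))

end Nat

theorem w_multiplicative_general (f h : ℕ) (hf : 1 ≤ f)
    (w : ℕ → ℕ)
    (hw : ∀ k, w k = k * Nat.totient (Nat.lcm k f) / (Nat.gcd k h * Nat.totient f)) :
    ∀ m n : ℕ, Nat.Coprime m n → w (m * n) = w m * w n := by
  intro m n hmn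
  have hφf : 0 < φ f := Nat.totient_pos.mpr hf
  rw [hw, hw, hw, Nat.div_mul_div_comm (Nat.gcd_mul_totient_dvd_mul_totient_lcm m h f)
    (Nat.gcd_mul_totient_dvd_mul_totient_lcm n h f), ← Nat.mul_div_mul_right _ _ hφf]
  congr 1
  · calc m * n * φ ((m * n).lcm f) * φ f
        = m * n * (φ f * φ ((m * n).lcm f)) := by ring
      _ = m * φ (m.lcm f) * (n * φ (n.lcm f)) := by rw [hmn.totient_mul_totient_lcm_mul]; ring
  · rw [Nat.gcd_comm, hmn.gcd_mul, Nat.gcd_comm h, Nat.gcd_comm h]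
    ring

theorem w_multiplicative (f h : ℕ) (hf : 1 ≤ f) (hh : 1 ≤ h)
    (w : ℕ → ℕ)
    (hw : ∀ k, w k = k * Nat.totient (Nat.lcm k f) / (Nat.gcd k h * Nat.totient f)) :
    ∀ m n : ℕ, Nat.Coprime m n → w (m * n) = w m * w n :=
  w_multiplicative_general f h hf w hw
end

section
/- With w as in the context, and for 1 ≤ a ≤ f with gcd(a,f) = 1, the series ∑_{n ≥ 1, a ≡ 1 mod gcd(f,n)} μ(n)/w(n) converges absolutely and equals ∏_{p | gcd(a−1,f)} (1 − 1/w(p)) · ∏_{p ∤ f} (1 − 1/w(p)). -/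
/-
Since `φ (lcm k f) * φ (gcd k f) = φ k * φ f`, we have `w k * φ (gcd k f) * gcd k h = k * φ k`
(so the truncating division in `w` is exact). Hence `w` is multiplicative and
`w n ≥ n φ(n) / (f h)`; as `n ≤ 2 φ(n)²` for squarefree `n`, the series is dominated by
`∑ n^(-3/2)`. The congruence `a ≡ 1 mod gcd(f, n)` is multiplicative in `n` (Chinese remainder
theorem), so the summand is a multiplicative function supported on squarefree numbers, and its sum
is `∏_p (1 + T p)`. At a prime `p` the congruence holds iff `p ∤ f` or `p ∣ a - 1`, which splits
each local factor into the two products; the infinite one is the Euler product of the same series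
restricted to `gcd(n, f) = 1`.
-/

open ArithmeticFunction
open scoped Nat ArithmeticFunction.Moebius

theorem Nat.totient_lcm_mul_totient_gcd (m n : ℕ) : φ (m.lcm n) * φ (m.gcd n) = φ m * φ n :=
  IsMultiplicative.lcm_apply_mul_gcd_apply (f := ⟨φ, Nat.totient_zero⟩)
    ⟨Nat.totient_one, Nat.totient_mul⟩

theorem Nat.le_two_mul_totient_sq_of_squarefree {n : ℕ} (hn : Squarefree n) :
    n ≤ 2 * φ n ^ 2 := by
  set s := n.primeFactors
  have hprod : ∏ p ∈ s, p = n := Nat.prod_primeFactors_of_squarefree hn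
  have htot : φ n = ∏ p ∈ s, (p - 1) := by
    have h := Nat.totient_mul_prod_primeFactors n
    rw [hprod, mul_comm] at h
    exact Nat.eq_of_mul_eq_mul_left (Nat.pos_of_ne_zero hn.ne_zero) h
  have htwo : ∏ p ∈ s with p = 2, p ≤ 2 := by
    rw [Finset.filter_eq']
    split_ifs <;> simp
  have hodd : ∀ p ∈ s.filter (· ≠ 2), p ≤ (p - 1) ^ 2 := by
    intro p hp
    rw [Finset.mem_filter] at hp
    have := (Nat.prime_of_mem_primeFactors hp.1).two_le
    obtain ⟨q, rfl⟩ : ∃ q, p = q + 3 := ⟨p - 3, by omega⟩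
    rw [Nat.add_sub_assoc (by norm_num)]
    nlinarith
  calc n = (∏ p ∈ s with p = 2, p) * ∏ p ∈ s with p ≠ 2, p := by
        rw [Finset.prod_filter_mul_prod_filter_not, hprod]
    _ ≤ 2 * ∏ p ∈ s with p ≠ 2, (p - 1) ^ 2 := by gcongr with p hp; exact hodd p hp
    _ ≤ 2 * ∏ p ∈ s, (p - 1) ^ 2 := by
        refine Nat.mul_le_mul_left 2 <|
          Finset.prod_le_prod_of_subset_of_one_le' (Finset.filter_subset _ s) fun p hp _ => ?_
        have := (Nat.prime_of_mem_primeFactors hp).two_le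
        exact Nat.one_le_pow _ _ (by omega)
    _ = 2 * φ n ^ 2 := by rw [htot, Finset.prod_pow]

theorem Nat.modEq_one_gcd_mul_iff {a f m n : ℕ} (hmn : m.Coprime n) :
    a ≡ 1 [MOD f.gcd (m * n)] ↔ a ≡ 1 [MOD f.gcd m] ∧ a ≡ 1 [MOD f.gcd n] := by
  rw [Nat.Coprime.gcd_mul f hmn, Nat.modEq_and_modEq_iff_modEq_mul (hmn.gcd_both f f)]

theorem Nat.modEq_one_gcd_prime_iff {a f p : ℕ} (ha : 1 ≤ a) (hf : f ≠ 0) (hp : p.Prime) :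
    a ≡ 1 [MOD f.gcd p] ↔ p ∈ ((a - 1).gcd f).primeFactors ∨ ¬p ∣ f := by
  rw [Nat.mem_primeFactors_of_ne_zero (Nat.gcd_ne_zero_right hf), Nat.dvd_gcd_iff]
  by_cases hpf : p ∣ f
  · rw [Nat.gcd_eq_right hpf, Nat.ModEq.comm, Nat.modEq_iff_dvd' ha]
    tauto
  · rw [((Nat.Prime.coprime_iff_not_dvd hp).mpr hpf).symm]
    simp [Nat.modEq_one, hpf]

theorem summable_abs_moebius_div_mul_totient :
    Summable fun n : ℕ => |(μ n : ℝ)| / (n * φ n) := by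
  refine Summable.of_nonneg_of_le (fun n => by positivity) (fun n => ?_)
    ((Real.summable_one_div_nat_rpow.mpr (by norm_num : (1 : ℝ) < 3 / 2)).mul_left √2)
  by_cases hsq : Squarefree n
  · have hn : (0 : ℝ) < n := by exact_mod_cast Nat.pos_of_ne_zero hsq.ne_zero
    have hφ : (0 : ℝ) < φ n := by
      exact_mod_cast Nat.totient_pos.mpr (Nat.pos_of_ne_zero hsq.ne_zero)
    have hμ : |(μ n : ℝ)| ≤ 1 := by exact_mod_cast abs_moebius_le_one
    have hsqrt : √n ≤ √2 * φ n := by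
      have : (n : ℝ) ≤ 2 * φ n ^ 2 := by
        exact_mod_cast Nat.le_two_mul_totient_sq_of_squarefree hsq
      calc √n ≤ √(2 * φ n ^ 2) := Real.sqrt_le_sqrt this
        _ = √2 * φ n := by rw [Real.sqrt_mul zero_le_two, Real.sqrt_sq hφ.le]
    have hpow : (n : ℝ) ^ (3 / 2 : ℝ) = n * √n := by
      rw [show (3 / 2 : ℝ) = 1 + 1 / 2 by norm_num, Real.rpow_add hn, Real.rpow_one,
        Real.sqrt_eq_rpow]
    rw [hpow, mul_one_div, div_le_div_iff₀ (by positivity) (by positivity)]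
    calc |(μ n : ℝ)| * (n * √n) ≤ 1 * (n * (√2 * φ n)) := by gcongr
      _ = √2 * (n * φ n) := by ring
  · rw [moebius_eq_zero_of_not_squarefree hsq]
    simp only [Int.cast_zero, abs_zero, zero_div]
    positivity

theorem hasProd_primes_ite_mem {M : Type*} [CommMonoid M] [TopologicalSpace M] {s : Finset ℕ}
    (hs : ∀ p ∈ s, p.Prime) (u : ℕ → M) :
    HasProd (fun p : Nat.Primes => if (p : ℕ) ∈ s then u p else 1) (∏ p ∈ s, u p) := by
  have : HasProd (fun p : Nat.Primes => if (p : ℕ) ∈ s then u p else 1)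
      (∏ p ∈ s.subtype Nat.Prime, if (p : ℕ) ∈ s then u p else 1) :=
    hasProd_prod_of_ne_finset_one fun p hp => if_neg fun h => hp (Finset.mem_subtype.mpr h)
  rwa [Finset.prod_subtype_of_mem (fun p => if p ∈ s then u p else 1) hs,
    Finset.prod_congr rfl fun p hp => if_pos hp] at this

namespace ArithmeticFunction

variable {R : Type*}

def restrict [Zero R] (F : ArithmeticFunction R) (P : ℕ → Prop) [DecidablePred P] :
    ArithmeticFunction R :=
  ⟨fun n => if P n then F n else 0, by simp⟩

@[simp]
theorem restrict_apply [Zero R] (F : ArithmeticFunction R) (P : ℕ → Prop) [DecidablePred P]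
    (n : ℕ) : F.restrict P n = if P n then F n else 0 := rfl

theorem IsMultiplicative.restrict [MonoidWithZero R] {F : ArithmeticFunction R}
    (hF : F.IsMultiplicative) {P : ℕ → Prop} [DecidablePred P] (hP1 : P 1)
    (hP : ∀ {m n : ℕ}, m ≠ 0 → n ≠ 0 → m.Coprime n → (P (m * n) ↔ P m ∧ P n)) :
    (F.restrict P).IsMultiplicative := by
  refine IsMultiplicative.iff_ne_zero.mpr ⟨by simp [hP1, hF.map_one], fun hm hn hmn => ?_⟩
  simp only [restrict_apply, hP hm hn hmn, hF.map_mul_of_coprime hmn]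
  split_ifs <;> simp_all

theorem summable_norm_restrict [SeminormedAddGroup R] {F : ArithmeticFunction R}
    (hF : Summable (‖F ·‖)) (P : ℕ → Prop) [DecidablePred P] :
    Summable (‖F.restrict P ·‖) :=
  .of_nonneg_of_le (fun _ => norm_nonneg _) (fun n => by
    rw [restrict_apply]; split_ifs <;> simp) hF

theorem IsMultiplicative.hasProd_one_add_of_squarefree [NormedCommRing R] [CompleteSpace R]
    {F : ArithmeticFunction R} (hF : F.IsMultiplicative)
    (hsq : ∀ n, ¬Squarefree n → F n = 0) (hsum : Summable (‖F ·‖)) :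
    HasProd (fun p : Nat.Primes => 1 + F p) (∑' n, F n) := by
  convert hF.eulerProduct_hasProd hsum using 2 with p
  have hp : (p : ℕ).Prime := p.2
  rw [tsum_eq_sum (s := {0, 1}), Finset.sum_pair zero_ne_one, pow_zero, pow_one, hF.map_one]
  intro e he
  simp only [Finset.mem_insert, Finset.mem_singleton, not_or] at he
  exact hsq _ fun hsq => he.2 ((Nat.squarefree_pow_iff hp.ne_one he.1).mp hsq).2

end ArithmeticFunction

def weight (f h : ℕ) : ArithmeticFunction ℕ :=
  ⟨fun k => k * φ (k.lcm f) / (k.gcd h * φ f), by simp⟩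

theorem weight_apply (f h k : ℕ) : weight f h k = k * φ (k.lcm f) / (k.gcd h * φ f) := rfl

section weight

variable {f h : ℕ}

theorem weight_mul_totient_gcd_mul_gcd (hf : 0 < f) (k : ℕ) :
    weight f h k * (φ (k.gcd f) * k.gcd h) = k * φ k := by
  have hdvd : k.gcd h * φ f ∣ k * φ (k.lcm f) :=
    mul_dvd_mul (Nat.gcd_dvd_left k h) (Nat.totient_dvd_of_dvd (Nat.dvd_lcm_right k f))
  apply Nat.eq_of_mul_eq_mul_right (Nat.totient_pos.mpr hf)
  calc weight f h k * (φ (k.gcd f) * k.gcd h) * φ f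
      = k * φ (k.lcm f) / (k.gcd h * φ f) * (k.gcd h * φ f) * φ (k.gcd f) := by
        rw [weight_apply]; ring
    _ = k * (φ (k.lcm f) * φ (k.gcd f)) := by rw [Nat.div_mul_cancel hdvd]; ring
    _ = k * φ k * φ f := by rw [Nat.totient_lcm_mul_totient_gcd]; ring

theorem isMultiplicative_weight (hf : 0 < f) : (weight f h).IsMultiplicative := by
  have hkey := weight_mul_totient_gcd_mul_gcd (h := h) hf
  refine IsMultiplicative.iff_ne_zero.mpr ⟨by simpa using hkey 1, fun {m n} hm hn hmn => ?_⟩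
  have hgcd : ∀ l, (m * n).gcd l = m.gcd l * n.gcd l := fun l => by
    rw [Nat.gcd_comm, Nat.Coprime.gcd_mul l hmn, Nat.gcd_comm l, Nat.gcd_comm l]
  have hcop : (m.gcd f).Coprime (n.gcd f) := by
    simpa only [Nat.gcd_comm _ f] using hmn.gcd_both f f
  have hD : φ ((m * n).gcd f) * (m * n).gcd h =
      φ (m.gcd f) * m.gcd h * (φ (n.gcd f) * n.gcd h) := by
    rw [hgcd, hgcd, Nat.totient_mul hcop]; ring
  have hD0 : 0 < φ ((m * n).gcd f) * (m * n).gcd h := by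
    have : 0 < m * n := by positivity
    exact Nat.mul_pos (Nat.totient_pos.mpr (Nat.gcd_pos_of_pos_left f this))
      (Nat.gcd_pos_of_pos_left h this)
  apply Nat.eq_of_mul_eq_mul_right hD0
  calc weight f h (m * n) * (φ ((m * n).gcd f) * (m * n).gcd h)
      = m * φ m * (n * φ n) := by rw [hkey, Nat.totient_mul hmn]; ring
    _ = weight f h m * (φ (m.gcd f) * m.gcd h) * (weight f h n * (φ (n.gcd f) * n.gcd h)) := by
        rw [hkey, hkey]
    _ = weight f h m * weight f h n * (φ ((m * n).gcd f) * (m * n).gcd h) := by rw [hD]; ring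

theorem mul_totient_le_weight_mul (hf : 0 < f) (hh : 0 < h) (k : ℕ) :
    k * φ k ≤ weight f h k * (f * h) := by
  rw [← weight_mul_totient_gcd_mul_gcd hf]
  gcongr
  · exact (Nat.totient_le _).trans (Nat.gcd_le_right k hf)
  · exact Nat.gcd_le_right k hh

theorem inv_weight_le (hf : 0 < f) (hh : 0 < h) (n : ℕ) :
    (weight f h n : ℝ)⁻¹ ≤ (f * h : ℝ) / (n * φ n) := by
  rcases Nat.eq_zero_or_pos n with rfl | hn
  · simp
  have hw : 0 < weight f h n := Nat.pos_of_ne_zero fun h0 => by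
    have := weight_mul_totient_gcd_mul_gcd (h := h) hf n
    rw [h0, zero_mul] at this
    exact (Nat.mul_pos hn (Nat.totient_pos.mpr hn)).ne this
  rw [inv_eq_one_div, div_le_div_iff₀ (by exact_mod_cast hw) (by positivity), one_mul]
  exact_mod_cast (mul_totient_le_weight_mul hf hh n).trans_eq (mul_comm _ _)

end weight

noncomputable def moebiusDivWeight (f h : ℕ) : ArithmeticFunction ℝ :=
  pdiv (μ : ArithmeticFunction ℝ) (weight f h : ArithmeticFunction ℝ)

section moebiusDivWeight

variable {f h : ℕ}

theorem moebiusDivWeight_apply (n : ℕ) :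
    moebiusDivWeight f h n = (μ n : ℝ) / (weight f h n : ℝ) := by
  simp [moebiusDivWeight, pdiv_apply]

theorem isMultiplicative_moebiusDivWeight (hf : 0 < f) : (moebiusDivWeight f h).IsMultiplicative :=
  isMultiplicative_moebius.intCast.pdiv (isMultiplicative_weight hf).natCast

theorem moebiusDivWeight_eq_zero_of_not_squarefree {n : ℕ} (hn : ¬Squarefree n) :
    moebiusDivWeight f h n = 0 := by
  simp [moebiusDivWeight_apply, moebius_eq_zero_of_not_squarefree hn]

theorem summable_norm_moebiusDivWeight (hf : 0 < f) (hh : 0 < h) :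
    Summable (‖moebiusDivWeight f h ·‖) := by
  refine .of_nonneg_of_le (fun n => norm_nonneg _) (fun n => ?_)
    (summable_abs_moebius_div_mul_totient.mul_left ((f : ℝ) * h))
  rw [moebiusDivWeight_apply, norm_div, Real.norm_eq_abs, Real.norm_natCast, div_eq_mul_inv,
    mul_comm, ← mul_div_assoc, mul_div_right_comm]
  exact mul_le_mul_of_nonneg_right (inv_weight_le hf hh n) (abs_nonneg _)

theorem hasProd_one_add_moebiusDivWeight_restrict (hf : 0 < f) (hh : 0 < h) {P : ℕ → Prop}
    [DecidablePred P] (hP1 : P 1)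
    (hP : ∀ {m n : ℕ}, m ≠ 0 → n ≠ 0 → m.Coprime n → (P (m * n) ↔ P m ∧ P n)) :
    HasProd (fun p : Nat.Primes => 1 + (moebiusDivWeight f h).restrict P p)
      (∑' n, (moebiusDivWeight f h).restrict P n) :=
  ((isMultiplicative_moebiusDivWeight hf).restrict hP1 hP).hasProd_one_add_of_squarefree
    (fun n hn => by simp [moebiusDivWeight_eq_zero_of_not_squarefree hn])
    (summable_norm_restrict (summable_norm_moebiusDivWeight hf hh) P)

theorem one_add_moebiusDivWeight_restrict_prime {P : ℕ → Prop} [DecidablePred P] {p : ℕ}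
    (hp : p.Prime) :
    1 + (moebiusDivWeight f h).restrict P p = if P p then 1 - 1 / (weight f h p : ℝ) else 1 := by
  simp only [restrict_apply, moebiusDivWeight_apply, moebius_apply_prime hp]
  split_ifs <;> push_cast <;> ring

theorem hasProd_moebiusDivWeight_restrict_coprime (hf : 0 < f) (hh : 0 < h) :
    HasProd (fun p : Nat.Primes => if (p : ℕ) ∣ f then 1 else 1 - 1 / (weight f h p : ℝ))
      (∑' n, (moebiusDivWeight f h).restrict (·.Coprime f) n) := by
  convert hasProd_one_add_moebiusDivWeight_restrict hf hh (P := (·.Coprime f))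
    (Nat.coprime_one_left f) fun _ _ _ => Nat.coprime_mul_iff_left using 2 with p
  simp only [one_add_moebiusDivWeight_restrict_prime p.2, p.2.coprime_iff_not_dvd, ite_not]

theorem hasProd_moebiusDivWeight_restrict_modEq (hf : 0 < f) (hh : 0 < h) {a : ℕ} (ha : 1 ≤ a) :
    HasProd (fun p : Nat.Primes =>
        (if (p : ℕ) ∈ ((a - 1).gcd f).primeFactors then 1 - 1 / (weight f h p : ℝ) else 1) *
          if (p : ℕ) ∣ f then 1 else 1 - 1 / (weight f h p : ℝ))
      (∑' n, (moebiusDivWeight f h).restrict (fun n => 1 ≤ n ∧ a ≡ 1 [MOD f.gcd n]) n) := by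
  convert hasProd_one_add_moebiusDivWeight_restrict hf hh
    (P := fun n => 1 ≤ n ∧ a ≡ 1 [MOD f.gcd n]) (by simp [Nat.modEq_one])
    (fun hm hn hmn => by simp [Nat.modEq_one_gcd_mul_iff hmn, Nat.one_le_iff_ne_zero, hm, hn])
    using 2 with p
  have hp1 : 1 ≤ (p : ℕ) := p.2.one_le
  have hS : (p : ℕ) ∈ ((a - 1).gcd f).primeFactors → (p : ℕ) ∣ f := fun hpS =>
    (Nat.dvd_of_mem_primeFactors hpS).trans (Nat.gcd_dvd_right _ _)
  simp only [one_add_moebiusDivWeight_restrict_prime p.2, Nat.modEq_one_gcd_prime_iff ha hf.ne' p.2]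
  by_cases hpf : (p : ℕ) ∣ f <;> by_cases hpS : (p : ℕ) ∈ ((a - 1).gcd f).primeFactors <;>
    simp_all

end moebiusDivWeight

open ArithmeticFunction in
theorem sum_moebius_div_w_eq_euler_product_general (f h : ℕ) (hf : 1 ≤ f) (hh : 1 ≤ h)
    (a : ℕ) (ha1 : 1 ≤ a)
    (w : ℕ → ℕ)
    (hw : ∀ k, w k = k * Nat.totient (Nat.lcm k f) / (Nat.gcd k h * Nat.totient f))
    (T : ℕ → ℝ)
    (hT : ∀ n, T n = if 1 ≤ n ∧ a % Nat.gcd f n = 1 % Nat.gcd f n then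
      (ArithmeticFunction.moebius n : ℝ) / (w n : ℝ) else 0) :
    Summable (fun n => |T n|) ∧
    ∑' n : ℕ, T n =
      (∏ p ∈ (Nat.gcd (a - 1) f).primeFactors, (1 - 1 / (w p : ℝ))) *
        ∏' p : Nat.Primes, (if (p : ℕ) ∣ f then 1 else 1 - 1 / (w (p : ℕ) : ℝ)) := by
  obtain rfl : w = weight f h := funext hw
  obtain rfl : T = (moebiusDivWeight f h).restrict fun n => 1 ≤ n ∧ a ≡ 1 [MOD f.gcd n] := by
    ext n; rw [hT, restrict_apply, moebiusDivWeight_apply]; rfl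
  refine ⟨by simpa using summable_norm_restrict (summable_norm_moebiusDivWeight hf hh) _, ?_⟩
  have hcoprime := hasProd_moebiusDivWeight_restrict_coprime hf hh
  rw [hcoprime.tprod_eq]
  refine (hasProd_moebiusDivWeight_restrict_modEq hf hh ha1).unique (HasProd.mul ?_ hcoprime)
  exact hasProd_primes_ite_mem (fun p hp => Nat.prime_of_mem_primeFactors hp) _

open ArithmeticFunction in
theorem sum_moebius_div_w_eq_euler_product (f h : ℕ) (hf : 1 ≤ f) (hh : 1 ≤ h)
    (a : ℕ) (ha1 : 1 ≤ a) (haf : a ≤ f) (hco : Nat.Coprime a f)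
    (w : ℕ → ℕ)
    (hw : ∀ k, w k = k * Nat.totient (Nat.lcm k f) / (Nat.gcd k h * Nat.totient f))
    (T : ℕ → ℝ)
    (hT : ∀ n, T n = if 1 ≤ n ∧ a % Nat.gcd f n = 1 % Nat.gcd f n then
      (ArithmeticFunction.moebius n : ℝ) / (w n : ℝ) else 0) :
    Summable (fun n => |T n|) ∧
    ∑' n : ℕ, T n =
      (∏ p ∈ (Nat.gcd (a - 1) f).primeFactors, (1 - 1 / (w p : ℝ))) *
        ∏' p : Nat.Primes, (if (p : ℕ) ∣ f then 1 else 1 - 1 / (w (p : ℕ) : ℝ)) :=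
  sum_moebius_div_w_eq_euler_product_general f h hf hh a ha1 w hw T hT
end

section
/- Let f, h ≥ 1 with h odd, 1 ≤ a ≤ f with gcd(a,f) = 1, and let Δ be the discriminant of a quadratic number field with b = Δ/gcd(f,Δ). Define S(b) = ∑_{n ≥ 1, Δ | lcm(n,f), a ≡ 1 mod gcd(f,n)} μ(n)/w(n). If b is even, then S(b) = 0. -/
/-!
A squarefree `n` contributes at most one factor `2` to `lcm(n, f)`, so if `4 ∣ Δ ∣ lcm(n, f)` then
the whole `2`-part of `Δ` divides `f`, hence `gcd(f, Δ)`, and `b = Δ / gcd(f, Δ)` is odd. An even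
discriminant is divisible by `4`, so when `b` is even no squarefree `n` satisfies the summation
condition and every term `μ(n) / w(n)` vanishes.
-/

theorem Nat.not_four_dvd_of_dvd_lcm_of_even_div_gcd {n f D : ℕ} (hn : Squarefree n) (hf : f ≠ 0)
    (hD : D ∣ n.lcm f) (heven : Even (D / f.gcd D)) : ¬ 4 ∣ D := by
  intro h4
  have hD0 : D ≠ 0 := ne_zero_of_dvd_ne_zero (Nat.lcm_ne_zero hn.ne_zero hf) hD
  have hq0 : D / f.gcd D ≠ 0 :=
    (Nat.div_pos (Nat.le_of_dvd (Nat.pos_of_ne_zero hD0) (Nat.gcd_dvd_right f D))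
      (Nat.gcd_pos_of_pos_right f (Nat.pos_of_ne_zero hD0))).ne'
  have hq : 1 ≤ (D / f.gcd D).factorization 2 :=
    (Nat.prime_two.dvd_iff_one_le_factorization hq0).mp heven.two_dvd
  have hD2 : 2 ≤ D.factorization 2 :=
    (Nat.prime_two.pow_dvd_iff_le_factorization hD0).mp (by simpa using h4)
  have hlcm : D.factorization 2 ≤ (n.lcm f).factorization 2 :=
    (Nat.factorization_le_iff_dvd hD0 (Nat.lcm_ne_zero hn.ne_zero hf)).mpr hD 2
  rw [Nat.factorization_div (Nat.gcd_dvd_right f D), Nat.factorization_gcd hf hD0] at hq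
  rw [Nat.factorization_lcm hn.ne_zero hf] at hlcm
  have hn2 := hn.natFactorization_le_one 2
  simp only [Finsupp.coe_tsub, Pi.sub_apply, Finsupp.inf_apply, Finsupp.sup_apply] at hq hlcm
  omega

theorem four_dvd_discr_of_even {d : ℤ} (heven : Even (if d % 4 = 1 then d else 4 * d)) :
    4 ∣ (if d % 4 = 1 then d else 4 * d) := by
  split_ifs at heven ⊢ with hd
  · obtain ⟨t, rfl⟩ := heven; omega
  · exact dvd_mul_right 4 d

theorem Int.not_four_dvd_of_dvd_lcm_of_even_div_gcd {n f : ℕ} {Δ : ℤ} (hn : Squarefree n)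
    (hf : f ≠ 0) (hΔ : Δ ∣ (n.lcm f : ℤ)) (heven : Even (Δ / (Int.gcd f Δ : ℤ))) : ¬ 4 ∣ Δ := by
  rw [← Int.natAbs_dvd_natAbs, Int.natAbs_natCast] at hΔ
  rw [← Int.natAbs_even, Int.natAbs_ediv_of_dvd (Int.gcd_dvd_right _ _),
    Int.natAbs_natCast] at heven
  rw [← Int.natAbs_dvd_natAbs]
  exact Nat.not_four_dvd_of_dvd_lcm_of_even_div_gcd hn hf hΔ heven

open ArithmeticFunction in
theorem S_eq_zero_of_b_even_general (f : ℕ) (hf : 1 ≤ f)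
    (a : ℕ) (w : ℕ → ℕ) (d : ℤ)
    (Δ : ℤ) (hΔ : Δ = if d % 4 = 1 then d else 4 * d)
    (b : ℤ) (hb : b = Δ / (Int.gcd (f : ℤ) Δ : ℤ)) (hbeven : Even b)
    (S : ℕ → ℝ)
    (hS : ∀ n, S n = if 1 ≤ n ∧ Δ ∣ (Nat.lcm n f : ℤ) ∧ a % Nat.gcd f n = 1 % Nat.gcd f n
      then (ArithmeticFunction.moebius n : ℝ) / (w n : ℝ) else 0) :
    ∑' n : ℕ, S n = 0 := by
  have hΔeven : Even Δ := by
    rw [← Int.mul_ediv_cancel' (Int.gcd_dvd_right (f : ℤ) Δ), ← hb]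
    exact hbeven.mul_left _
  have hΔ4 : 4 ∣ Δ := hΔ ▸ four_dvd_discr_of_even (hΔ ▸ hΔeven)
  have hterm : ∀ n, S n = 0 := by
    intro n
    rw [hS]
    split_ifs with hcond
    · have hμ : moebius n = 0 := by
        by_contra hμ
        exact Int.not_four_dvd_of_dvd_lcm_of_even_div_gcd
          (moebius_ne_zero_iff_squarefree.mp hμ) (by omega) hcond.2.1 (hb ▸ hbeven) hΔ4
      simp [hμ]
    · rfl
  simp [hterm]

open ArithmeticFunction in
theorem S_eq_zero_of_b_even (f h : ℕ) (hf : 1 ≤ f) (hh : 1 ≤ h) (hhodd : Odd h)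
    (a : ℕ) (ha1 : 1 ≤ a) (haf : a ≤ f) (hco : Nat.Coprime a f)
    (w : ℕ → ℕ)
    (hw : ∀ k, w k = k * Nat.totient (Nat.lcm k f) / (Nat.gcd k h * Nat.totient f))
    (d : ℤ) (hd : Squarefree d) (hd0 : d ≠ 0) (hd1 : d ≠ 1)
    (Δ : ℤ) (hΔ : Δ = if d % 4 = 1 then d else 4 * d)
    (b : ℤ) (hb : b = Δ / (Int.gcd (f : ℤ) Δ : ℤ)) (hbeven : Even b)
    (S : ℕ → ℝ)
    (hS : ∀ n, S n = if 1 ≤ n ∧ Δ ∣ (Nat.lcm n f : ℤ) ∧ a % Nat.gcd f n = 1 % Nat.gcd f n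
      then (ArithmeticFunction.moebius n : ℝ) / (w n : ℝ) else 0) :
    ∑' n : ℕ, S n = 0 :=
  S_eq_zero_of_b_even_general f hf a w d Δ hΔ b hb hbeven S hS
end

section
/- Let g be a squarefree integer with g ≡ 1 (mod 4), g ≠ 1, and let f ≥ 1 with gcd(f, g) = 1 and f odd. Then √g ∈ ℚ(ζ_{f·|g|}) but √g ∉ ℚ(ζ_f). -/
/-!
For an odd prime `p` and a primitive `p`-th root of unity `ζₚ`, the quadratic Gauss sum
`τₚ = ∑ (a/p) ζₚ^a` satisfies `τₚ² = χ₄(p) p`. Hence for squarefree `g ≡ 1 (mod 4)` the product of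
the `τₚ` over `p ∣ g`, with `ζₚ` a power of `ζ = ζ_{f|g|}`, lies in `ℚ(ζ)` and squares to
`∏ χ₄(p) p = g`.

If `√g` also lay in `ℚ(ζ_f)`, pick `p ∣ g` and `c ≡ 1 (mod f|g|/p)` that is a non-residue mod `p`.
The embedding `ζ ↦ ζ^c` of `ℚ(ζ)` fixes `ζ_f = ζ^|g|`, hence `√g`; but it multiplies `τₚ` by
`(c/p) = -1` and fixes every other `τ_q`, so it negates `√g`.
-/

open Polynomial IntermediateField ZMod

variable {K : Type*}

-- For prime `p`, `jacobiSym a p` is the Legendre symbol; using it needs no `Fact p.Prime` instance.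
noncomputable def quadGaussSum [CommRing K] (p : ℕ) (ζ : K) : K :=
  ∑ a ∈ Finset.range p, (jacobiSym a p : K) * ζ ^ a

theorem map_quadGaussSum [CommRing K] {L F : Type*} [CommRing L] [FunLike F K L]
    [RingHomClass F K L] (σ : F) (p : ℕ) (ζ : K) :
    σ (quadGaussSum p ζ) = quadGaussSum p (σ ζ) := by
  simp only [quadGaussSum, map_sum, map_mul, map_intCast, map_pow]

theorem quadGaussSum_eq_gaussSum [CommRing K] (p : ℕ) [Fact p.Prime] {ζ : K} (hζ : ζ ^ p = 1) :
    quadGaussSum p ζ =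
      gaussSum ((quadraticChar (ZMod p)).ringHomComp (Int.castRingHom K))
        (AddChar.zmodChar p hζ) := by
  refine Finset.sum_nbij' (fun a ↦ (a : ZMod p)) ZMod.val (by simp)
    (fun a _ ↦ by simpa using ZMod.val_lt a)
    (fun a ha ↦ ZMod.val_cast_of_lt (Finset.mem_range.mp ha))
    (fun a _ ↦ ZMod.natCast_zmod_val a) fun a _ ↦ ?_
  rw [AddChar.zmodChar_apply', MulChar.ringHomComp_apply, ← jacobiSym.legendreSym.to_jacobiSym,
    legendreSym, Int.cast_natCast, eq_intCast]

theorem quadGaussSum_pow_of_coprime [CommRing K] {p : ℕ} (hp : p.Prime) {ζ : K} (hζ : ζ ^ p = 1)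
    {c : ℕ} (hc : c.Coprime p) :
    quadGaussSum p (ζ ^ c) = jacobiSym c p * quadGaussSum p ζ := by
  have := Fact.mk hp
  have hζc : (ζ ^ c) ^ p = 1 := by rw [pow_right_comm, hζ, one_pow]
  set u := ZMod.unitOfCoprime c hc
  have hψ : AddChar.zmodChar p hζc = (AddChar.zmodChar p hζ).mulShift u := by
    ext a
    conv_rhs => rw [← ZMod.natCast_zmod_val a]
    rw [AddChar.mulShift_apply, ZMod.coe_unitOfCoprime, ← Nat.cast_mul, AddChar.zmodChar_apply',
      AddChar.zmodChar_apply, ← pow_mul]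
  rw [quadGaussSum_eq_gaussSum p hζc, quadGaussSum_eq_gaussSum p hζ, hψ, gaussSum_mulShift_eq,
    ((quadraticChar_isQuadratic (ZMod p)).comp _).inv, MulChar.ringHomComp_apply,
    ZMod.coe_unitOfCoprime, ← jacobiSym.legendreSym.to_jacobiSym, legendreSym,
    Int.cast_natCast, eq_intCast]

theorem quadGaussSum_sq [Field K] [CharZero K] {p : ℕ} (hp : p.Prime) (hp2 : p ≠ 2) {ζ : K}
    (hζ : IsPrimitiveRoot ζ p) : quadGaussSum p ζ ^ 2 = ((χ₄ p * p : ℤ) : K) := by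
  have := Fact.mk hp
  have hchar : ringChar (ZMod p) ≠ 2 := by rwa [ZMod.ringChar_zmod_n]
  rw [quadGaussSum_eq_gaussSum p hζ.pow_eq_one,
    gaussSum_sq ((MulChar.ringHomComp_ne_one_iff Int.cast_injective).mpr
      (quadraticChar_ne_one hchar)) ((quadraticChar_isQuadratic _).comp _)
      (AddChar.zmodChar_primitive_of_primitive_root p hζ),
    MulChar.ringHomComp_apply, quadraticChar_neg_one hchar, ZMod.card]
  push_cast
  rfl

theorem Nat.prod_primeFactors_χ₄_mul {d : ℕ} (hd : Squarefree d) :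
    ∏ p ∈ d.primeFactors, (χ₄ p * p : ℤ) = χ₄ d * d := by
  rw [Finset.prod_mul_distrib, ← map_prod, ← Nat.cast_prod, ← Nat.cast_prod,
    Nat.prod_primeFactors_of_squarefree hd]

theorem Int.χ₄_natAbs_mul_natAbs_of_emod_four_eq_one {g : ℤ} (hg : g % 4 = 1) :
    χ₄ g.natAbs * g.natAbs = g := by
  obtain ⟨k, rfl | rfl⟩ := Int.eq_nat_or_neg g
  · rw [Int.natAbs_natCast, χ₄_nat_one_mod_four (by omega), one_mul]
  · rw [Int.natAbs_neg, Int.natAbs_natCast, χ₄_nat_three_mod_four (by omega), neg_one_mul]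

theorem Nat.coprime_mul_div_of_mem_primeFactors {f d p : ℕ} (hfd : f.Coprime d)
    (hd : Squarefree d) (hp : p ∈ d.primeFactors) : (f * d / p).Coprime p := by
  have hpd := Nat.dvd_of_mem_primeFactors hp
  rw [Nat.mul_div_assoc f hpd]
  refine (hfd.coprime_dvd_right hpd).mul_left ?_
  simpa [Nat.gcd_eq_right hpd] using
    Nat.coprime_div_gcd_of_squarefree hd (Nat.prime_of_mem_primeFactors hp).ne_zero

theorem Nat.exists_modEq_one_jacobiSym_eq_neg_one {m p : ℕ} (hp : p.Prime) (hp2 : p ≠ 2)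
    (hmp : m.Coprime p) : ∃ c : ℕ, c ≡ 1 [MOD m] ∧ jacobiSym c p = -1 ∧ c.Coprime (m * p) := by
  have := Fact.mk hp
  obtain ⟨b, hb⟩ := quadraticChar_exists_neg_one (F := ZMod p) (by rwa [ZMod.ringChar_zmod_n])
  obtain ⟨c, hcm, hcp⟩ := Nat.chineseRemainder hmp 1 b.val
  have hcb : (c : ZMod p) = b := by
    rw [(ZMod.natCast_eq_natCast_iff c b.val p).mpr hcp, ZMod.natCast_zmod_val]
  refine ⟨c, hcm, ?_, Nat.Coprime.mul_right ?_ ?_⟩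
  · rw [← jacobiSym.legendreSym.to_jacobiSym, legendreSym, Int.cast_natCast, hcb, hb]
  · simpa [Nat.Coprime] using hcm.gcd_eq
  · rw [← ZMod.isUnit_iff_coprime, hcb, isUnit_iff_ne_zero]
    rintro rfl
    simp at hb

theorem IsPrimitiveRoot.exists_algHom_adjoin_gen_eq_pow [Field K] [CharZero K] {ζ : K} {n c : ℕ}
    (hζ : IsPrimitiveRoot ζ n) (hn : 0 < n) (hc : c.Coprime n) :
    ∃ σ : ℚ⟮ζ⟯ →ₐ[ℚ] K, σ (AdjoinSimple.gen ℚ ζ) = ζ ^ c := by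
  have hroot : ζ ^ c ∈ (minpoly ℚ ζ).aroots K := by
    rw [← cyclotomic_eq_minpoly_rat hζ hn, mem_aroots, aeval_def, eval₂_eq_eval_map,
      map_cyclotomic]
    exact ⟨cyclotomic_ne_zero n ℚ, (isRoot_cyclotomic_iff_charZero hn).mpr (hζ.pow_of_coprime c hc)⟩
  exact ⟨(algHomAdjoinIntegralEquiv ℚ (hζ.isIntegral hn).tower_top).symm ⟨_, hroot⟩,
    algHomAdjoinIntegralEquiv_symm_apply_gen _ _ _⟩

theorem IntermediateField.algHom_apply_of_mem_adjoin_pow {F : Type*} [Field F] [Field K]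
    [Algebra F K] {α : K} {k : ℕ} (σ : F⟮α⟯ →ₐ[F] K) (hσ : σ (AdjoinSimple.gen F α) ^ k = α ^ k)
    {x : K} (hx : x ∈ F⟮α ^ k⟯) (hx' : x ∈ F⟮α⟯) : σ ⟨x, hx'⟩ = x := by
  have hle : F⟮α ^ k⟯ ≤ F⟮α⟯ := adjoin_simple_le_iff.mpr (pow_mem (mem_adjoin_simple_self F α) k)
  have hcomp : σ.comp (inclusion hle) = (F⟮α ^ k⟯).val := by
    refine adjoin_algHom_ext F fun y hy ↦ ?_
    rw [Set.mem_singleton_iff] at hy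
    subst hy
    exact (map_pow σ _ k).trans hσ
  exact DFunLike.congr_fun hcomp ⟨x, hx⟩

theorem apply_eq_neg_of_sq_eq {R S F : Type*} [CommRing R] [NoZeroDivisors R] [Ring S]
    [FunLike F R S] [RingHomClass F R S] {σ τ : F} {s t : R} (hσt : σ t = -τ t)
    (hst : s ^ 2 = t ^ 2) : σ s = -τ s := by
  rcases sq_eq_sq_iff_eq_or_eq_neg.mp hst with rfl | rfl <;> simp [hσt]

noncomputable def gaussSqrt [CommRing K] (d n : ℕ) (ζ : K) : K :=
  ∏ p ∈ d.primeFactors, quadGaussSum p (ζ ^ (n / p))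

theorem map_gaussSqrt [CommRing K] {L F : Type*} [CommRing L] [FunLike F K L]
    [RingHomClass F K L] (σ : F) (d n : ℕ) (ζ : K) :
    σ (gaussSqrt d n ζ) = gaussSqrt d n (σ ζ) := by
  simp only [gaussSqrt, map_prod, map_quadGaussSum, map_pow]

theorem gaussSqrt_mem_adjoin {F : Type*} [Field F] [Field K] [Algebra F K] (d n : ℕ) (ζ : K) :
    gaussSqrt d n ζ ∈ F⟮ζ⟯ :=
  map_gaussSqrt (F⟮ζ⟯).val d n (AdjoinSimple.gen F ζ) ▸ SetLike.coe_mem _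

theorem gaussSqrt_sq [Field K] [CharZero K] {d n : ℕ} (hd : Squarefree d) (hodd : Odd d)
    (hn : 0 < n) (hdn : d ∣ n) {ζ : K} (hζ : IsPrimitiveRoot ζ n) :
    gaussSqrt d n ζ ^ 2 = ((χ₄ d * d : ℤ) : K) := by
  rw [gaussSqrt, ← Finset.prod_pow, ← Nat.prod_primeFactors_χ₄_mul hd, Int.cast_prod]
  refine Finset.prod_congr rfl fun p hp ↦ ?_
  have hpd := Nat.dvd_of_mem_primeFactors hp
  exact quadGaussSum_sq (Nat.prime_of_mem_primeFactors hp)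
    (hodd.ne_two_of_dvd_nat hpd)
    (hζ.pow hn (Nat.div_mul_cancel (hpd.trans hdn)).symm)

theorem gaussSqrt_pow_of_modEq_one [CommRing K] {d n p c : ℕ} {ζ : K} (hζ : ζ ^ n = 1)
    (hdn : d ∣ n) (hp : p ∈ d.primeFactors) (hc : c ≡ 1 [MOD n / p]) (hcp : c.Coprime p) :
    gaussSqrt d n (ζ ^ c) = jacobiSym c p * gaussSqrt d n ζ := by
  have hroot : ∀ q ∈ d.primeFactors, (ζ ^ (n / q)) ^ q = 1 := fun q hq ↦ by
    rw [← pow_mul, Nat.div_mul_cancel ((Nat.dvd_of_mem_primeFactors hq).trans hdn), hζ]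
  simp only [gaussSqrt, pow_right_comm ζ c]
  rw [← Finset.mul_prod_erase _ _ hp, ← Finset.mul_prod_erase _ _ hp,
    quadGaussSum_pow_of_coprime (Nat.prime_of_mem_primeFactors hp) (hroot p hp) hcp, mul_assoc]
  congr 2
  refine Finset.prod_congr rfl fun q hq ↦ ?_
  obtain ⟨hqp, hq⟩ := Finset.mem_erase.mp hq
  have hqn : q ∣ n / p := by
    refine ((Nat.coprime_primes (Nat.prime_of_mem_primeFactors hq)
      (Nat.prime_of_mem_primeFactors hp)).mpr hqp).dvd_of_dvd_mul_left ?_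
    rw [Nat.mul_div_cancel' ((Nat.dvd_of_mem_primeFactors hp).trans hdn)]
    exact (Nat.dvd_of_mem_primeFactors hq).trans hdn
  rw [pow_eq_pow_of_modEq (hc.of_dvd hqn) (hroot q hq), pow_one]

theorem eq_zero_of_sq_eq_gaussSqrt_sq_of_mem_adjoin_pow [Field K] [CharZero K] {ζ : K}
    {n d p k : ℕ} (hζ : IsPrimitiveRoot ζ n) (hn : 0 < n) (hdn : d ∣ n) (hp : p ∈ d.primeFactors)
    (hp2 : p ≠ 2) (hpn : (n / p).Coprime p) (hpk : p ∣ k) {x : K} (hx : x ∈ ℚ⟮ζ ^ k⟯)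
    (hx2 : x ^ 2 = gaussSqrt d n ζ ^ 2) : x = 0 := by
  have hpn' : p ∣ n := (Nat.dvd_of_mem_primeFactors hp).trans hdn
  obtain ⟨c, hc1, hcp, hcn⟩ :=
    Nat.exists_modEq_one_jacobiSym_eq_neg_one (Nat.prime_of_mem_primeFactors hp) hp2 hpn
  rw [Nat.div_mul_cancel hpn'] at hcn
  obtain ⟨σ, hσ⟩ := hζ.exists_algHom_adjoin_gen_eq_pow hn hcn
  have hx' : x ∈ ℚ⟮ζ⟯ := adjoin_simple_le_iff.mpr (pow_mem (mem_adjoin_simple_self ℚ ζ) k) hx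
  have hσx : σ ⟨x, hx'⟩ = x := by
    refine algHom_apply_of_mem_adjoin_pow σ ((congrArg (· ^ k) hσ).trans ?_) hx hx'
    obtain ⟨j, rfl⟩ := hpk
    have hroot : (ζ ^ (p * j)) ^ (n / p) = 1 := by
      rw [← pow_mul, mul_right_comm, Nat.mul_div_cancel' hpn', pow_mul, hζ.pow_eq_one, one_pow]
    rw [pow_right_comm, pow_eq_pow_of_modEq hc1 hroot, pow_one]
  set t := gaussSqrt d n (AdjoinSimple.gen ℚ ζ)
  have ht : (t : K) = gaussSqrt d n ζ := map_gaussSqrt (ℚ⟮ζ⟯).val d n _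
  have hσt : σ t = -(ℚ⟮ζ⟯).val t := by
    rw [map_gaussSqrt, hσ, gaussSqrt_pow_of_modEq_one hζ.pow_eq_one hdn hp hc1
      (hcn.coprime_dvd_right hpn'), hcp, ← ht]
    simp
  have hxt : (⟨x, hx'⟩ : ℚ⟮ζ⟯) ^ 2 = t ^ 2 := Subtype.ext (by simp [hx2, ht])
  have h := apply_eq_neg_of_sq_eq hσt hxt
  rw [hσx] at h
  exact self_eq_neg.mp h

theorem Complex.exp_div_mul_pow (z a : ℂ) {d : ℕ} (hd : d ≠ 0) :
    exp (z / (a * d)) ^ d = exp (z / a) := by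
  have hd' : (d : ℂ) ≠ 0 := Nat.cast_ne_zero.mpr hd
  rw [← exp_nat_mul]
  field_simp

open Complex IntermediateField in
theorem sqrt_mem_cyclotomic_conductor_general
    (g : ℤ) (hg : Squarefree g) (hg4 : g % 4 = 1) (hg1 : g ≠ 1)
    (f : ℕ) (hco : Int.gcd (f : ℤ) g = 1)
    (ζ ζ' : ℂ)
    (hζ : ζ = Complex.exp (2 * Real.pi * Complex.I / (f * g.natAbs)))
    (hζ' : ζ' = Complex.exp (2 * Real.pi * Complex.I / f)) :
    (∃ x ∈ ℚ⟮ζ⟯, x ^ 2 = (g : ℂ)) ∧ ¬ ∃ x ∈ ℚ⟮ζ'⟯, x ^ 2 = (g : ℂ) := by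
  set d := g.natAbs
  have hd : 1 < d := by obtain ⟨k, rfl | rfl⟩ := Int.eq_nat_or_neg g <;> simp [d] <;> omega
  have hd_odd : Odd d := Int.natAbs_odd.mpr (Int.odd_iff.mpr (by omega))
  have hfd : f.Coprime d := hco
  have hf : f ≠ 0 := by rintro rfl; simp [d] at hfd; omega
  have hN : 0 < f * d := by positivity
  have hζN : IsPrimitiveRoot ζ (f * d) := by
    rw [hζ]
    convert Complex.isPrimitiveRoot_exp (f * d) hN.ne' using 3
    push_cast
    ring
  have hsq : gaussSqrt d (f * d) ζ ^ 2 = g := by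
    rw [gaussSqrt_sq (Int.squarefree_natAbs.mpr hg) hd_odd hN (dvd_mul_left d f) hζN,
      Int.χ₄_natAbs_mul_natAbs_of_emod_four_eq_one hg4]
  refine ⟨⟨_, gaussSqrt_mem_adjoin d (f * d) ζ, hsq⟩, ?_⟩
  rintro ⟨x, hx, hx2⟩
  rw [hζ', ← Complex.exp_div_mul_pow _ _ (by omega : d ≠ 0), ← hζ] at hx
  obtain ⟨p, hp⟩ := Nat.nonempty_primeFactors.mpr hd
  have hpd := Nat.dvd_of_mem_primeFactors hp
  have hx0 := eq_zero_of_sq_eq_gaussSqrt_sq_of_mem_adjoin_pow hζN hN (dvd_mul_left d f) hp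
    (hd_odd.ne_two_of_dvd_nat hpd)
    (Nat.coprime_mul_div_of_mem_primeFactors hfd (Int.squarefree_natAbs.mpr hg) hp) hpd hx
    (hx2.trans hsq.symm)
  exact hg.ne_zero (by exact_mod_cast (show (g : ℂ) = 0 by rw [← hx2, hx0, sq, zero_mul]))

open Complex IntermediateField in
theorem sqrt_mem_cyclotomic_conductor
    (g : ℤ) (hg : Squarefree g) (hg4 : g % 4 = 1) (hg1 : g ≠ 1)
    (f : ℕ) (hf : 1 ≤ f) (hfodd : Odd f) (hco : Int.gcd (f : ℤ) g = 1)
    (ζ ζ' : ℂ)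
    (hζ : ζ = Complex.exp (2 * Real.pi * Complex.I / (f * g.natAbs)))
    (hζ' : ζ' = Complex.exp (2 * Real.pi * Complex.I / f)) :
    (∃ x ∈ ℚ⟮ζ⟯, x ^ 2 = (g : ℂ)) ∧ ¬ ∃ x ∈ ℚ⟮ζ'⟯, x ^ 2 = (g : ℂ) :=
  sqrt_mem_cyclotomic_conductor_general g hg hg4 hg1 f hco ζ ζ' hζ hζ'
end
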